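/- arXiv:1902.00774 — 5 statements merged into one kernel-verified Lean document; each statement's English description precedes it below -/
import Mathlib

section
/- If A is a two-sided ideal of a (possibly non-unital) ring L such that A has local units (for every a ∈ A there exists an idempotent u ∈ A with ua = a = au), then for every two-sided ideal B of L one has AB = A ∩ B and BA = B ∩ A; in particular A² = A and AB = BA. -/
/-- The product of two two-sided ideals: the smallest two-sided ideal
containing all products `a * b` with `a ∈ A`, `b ∈ B`. -/
def tsiMul {L : Type*} [NonUnitalRing L] (A B : TwoSidedIdeal L) : TwoSidedIdeal L :=
  sInf {I : TwoSidedIdeal L | ∀ a ∈ A, ∀ b ∈ B, a * b ∈ I}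

/-- A two-sided ideal `A` has local units if every `a ∈ A` admits an idempotent
`u ∈ A` with `u * a = a = a * u`. -/
def HasLocalUnits {L : Type*} [NonUnitalRing L] (A : TwoSidedIdeal L) : Prop :=
  ∀ a ∈ A, ∃ u ∈ A, u * u = u ∧ u * a = a ∧ a * u = a

section

variable {L : Type*} [NonUnitalRing L]

lemma tsiMul_le_inf (A B : TwoSidedIdeal L) : tsiMul A B ≤ A ⊓ B :=
  sInf_le fun a ha b hb => ⟨A.mul_mem_right a b ha, B.mul_mem_left a b hb⟩

lemma mul_mem_tsiMul (A B : TwoSidedIdeal L) {a b : L} (ha : a ∈ A) (hb : b ∈ B) :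
    a * b ∈ tsiMul A B :=
  (TwoSidedIdeal.mem_sInf L).mpr fun _ hI => hI a ha b hb

lemma tsiMul_eq_inf_of_hasLocalUnits_left {A : TwoSidedIdeal L} (hA : HasLocalUnits A)
    (B : TwoSidedIdeal L) : tsiMul A B = A ⊓ B := by
  refine le_antisymm (tsiMul_le_inf A B) ?_
  rintro x ⟨hxA, hxB⟩
  obtain ⟨u, huA, -, hux, -⟩ := hA x hxA
  exact hux ▸ mul_mem_tsiMul A B huA hxB

lemma tsiMul_eq_inf_of_hasLocalUnits_right {A : TwoSidedIdeal L} (hA : HasLocalUnits A)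
    (B : TwoSidedIdeal L) : tsiMul B A = B ⊓ A := by
  refine le_antisymm (tsiMul_le_inf B A) ?_
  rintro x ⟨hxB, hxA⟩
  obtain ⟨u, huA, -, -, hxu⟩ := hA x hxA
  exact hxu ▸ mul_mem_tsiMul B A hxB huA

end

theorem graded_ideal_property {L : Type*} [NonUnitalRing L]
    (A : TwoSidedIdeal L) (hA : HasLocalUnits A) (B : TwoSidedIdeal L) :
    tsiMul A B = A ⊓ B ∧ tsiMul B A = B ⊓ A ∧
      tsiMul A A = A ∧ tsiMul A B = tsiMul B A := by
  have hAB := tsiMul_eq_inf_of_hasLocalUnits_left hA B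
  have hBA := tsiMul_eq_inf_of_hasLocalUnits_right hA B
  have hAA : tsiMul A A = A := (tsiMul_eq_inf_of_hasLocalUnits_left hA A).trans (inf_idem A)
  exact ⟨hAB, hBA, hAA, by rw [hAB, hBA, inf_comm]⟩
end

section
/- Let R be a commutative ring in which the lattice of ideals is distributive (an arithmetical ring). Given ideals A₁, …, A_n and elements x₁, …, x_n ∈ R satisfying x_i − x_j ∈ A_i + A_j for all i ≠ j, there exists x ∈ R with x − x_i ∈ A_i for all i (Chinese Remainder Theorem for arithmetical rings). -/
/-!
Induct on the number of congruences. Having solved the first ones by `y`, the last congruence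
`z ≡ x a mod N a` can be added exactly when `y - x a ∈ (⨅ i, N i) ⊔ N a`. Distributivity turns
this sum into `⨅ i, (N i ⊔ N a)`, and `y - x a = (y - x i) + (x i - x a)` lies in each `N i ⊔ N a`
by the compatibility conditions.
-/

namespace Submodule

variable {R M : Type*} [Ring R] [AddCommGroup M] [Module R M]

theorem exists_sub_mem_sub_mem_of_sub_mem_sup {P Q : Submodule R M} {a b : M}
    (h : a - b ∈ P ⊔ Q) : ∃ z, z - a ∈ P ∧ z - b ∈ Q := by
  obtain ⟨u, hu, v, hv, huv⟩ := mem_sup.mp h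
  refine ⟨a - u, by simpa using neg_mem hu, ?_⟩
  rwa [sub_right_comm, ← huv, add_sub_cancel_left]

theorem exists_sub_mem_of_pairwise_sub_mem_sup
    (hdist : ∀ A B C : Submodule R M, A ⊓ (B ⊔ C) = (A ⊓ B) ⊔ (A ⊓ C))
    {ι : Type*} (N : ι → Submodule R M) (x : ι → M) (s : Finset ι)
    (hx : ∀ i ∈ s, ∀ j ∈ s, i ≠ j → x i - x j ∈ N i ⊔ N j) :
    ∃ y, ∀ i ∈ s, y - x i ∈ N i := by
  let _ : DistribLattice (Submodule R M) := .ofInfSupLe fun A B C => (hdist A B C).le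
  induction s using Finset.cons_induction with
  | empty => exact ⟨0, by simp⟩
  | cons a s ha ih =>
    obtain ⟨y, hy⟩ := ih fun i hi j hj => hx i (by simp [hi]) j (by simp [hj])
    have hya : y - x a ∈ s.inf N ⊔ N a := by
      rw [Finset.inf_sup_distrib_right, mem_finsetInf]
      intro i hi
      have hia : x i - x a ∈ N i ⊔ N a :=
        hx i (by simp [hi]) a (by simp) (ne_of_mem_of_not_mem hi ha)
      simpa using add_mem (mem_sup_left (hy i hi)) hia
    obtain ⟨z, hzy, hza⟩ := exists_sub_mem_sub_mem_of_sub_mem_sup hya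
    refine ⟨z, (Finset.forall_mem_cons ha _).mpr ⟨hza, fun i hi => ?_⟩⟩
    simpa using add_mem ((mem_finsetInf.mp hzy) i hi) (hy i hi)

end Submodule

theorem crt_of_arithmetical {R : Type*} [CommRing R]
    (hdist : ∀ A B C : Ideal R, A ⊓ (B ⊔ C) = (A ⊓ B) ⊔ (A ⊓ C))
    (n : ℕ) (A : Fin n → Ideal R) (x : Fin n → R)
    (hcompat : ∀ i j, i ≠ j → x i - x j ∈ A i ⊔ A j) :
    ∃ y : R, ∀ i, y - x i ∈ A i := by
  obtain ⟨y, hy⟩ := Submodule.exists_sub_mem_of_pairwise_sub_mem_sup hdist A x Finset.univ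
    fun i _ j _ => hcompat i j
  exact ⟨y, fun i => hy i (Finset.mem_univ i)⟩
end

section
/- In a Prüfer-like setting: if R is a commutative ring in which for any two ideals A ⊆ B there exists an ideal C with A = BC (a multiplication ring), then for any ideals A and B of R one has (A ∩ B)(A + B) = AB. -/
theorem inf_mul_sup_eq_mul_of_multiplication_ring {R : Type*} [CommRing R]
    (hmul : ∀ A B : Ideal R, A ≤ B → ∃ C : Ideal R, A = B * C)
    (A B : Ideal R) :
    (A ⊓ B) * (A ⊔ B) = A * B := by
  obtain ⟨C₁, hC₁⟩ := hmul A (A ⊔ B) le_sup_left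
  obtain ⟨C₂, hC₂⟩ := hmul B (A ⊔ B) le_sup_right
  apply le_antisymm
  · rw [Ideal.mul_sup]
    apply sup_le
    · calc (A ⊓ B) * A ≤ B * A := Ideal.mul_mono inf_le_right le_rfl
        _ = A * B := mul_comm _ _
    · exact Ideal.mul_mono inf_le_left le_rfl
  · have key : (A ⊔ B) * C₁ * C₂ ≤ A ⊓ B := by
      apply le_inf
      · calc (A ⊔ B) * C₁ * C₂ = A * C₂ := by rw [← hC₁]
          _ ≤ A := Ideal.mul_le_left
      · calc (A ⊔ B) * C₁ * C₂ = (A ⊔ B) * C₂ * C₁ := by ring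
          _ = B * C₁ := by rw [← hC₂]
          _ ≤ B := Ideal.mul_le_left
    calc A * B = (A ⊔ B) * C₁ * ((A ⊔ B) * C₂) := by rw [← hC₁, ← hC₂]
      _ = ((A ⊔ B) * C₁ * C₂) * (A ⊔ B) := by ring
      _ ≤ (A ⊓ B) * (A ⊔ B) := Ideal.mul_mono key le_rfl
end

section
/- Let R be a commutative Noetherian ring with identity and A an ideal of R such that 1 − x is not a zero divisor for every x ∈ A. Then ⋂_{n≥1} Aⁿ = 0 (Krull's intersection theorem). -/
/-! By the Artin–Rees lemma, every `m` in `⋂ Iⁿ M` satisfies `r • m = m` for some `r ∈ I`, i.e.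
`(1 - r) • m = 0`; if `1 - r` is not a zero divisor on `M`, this forces `m = 0`. -/

namespace Ideal

variable {R M : Type*} [CommRing R] [IsNoetherianRing R] [AddCommGroup M] [Module R M]
  [Module.Finite R M] (I : Ideal R)

theorem iInf_pow_smul_eq_bot_of_one_sub_smul_injective
    (h : ∀ x ∈ I, ∀ m : M, (1 - x) • m = 0 → m = 0) :
    (⨅ i : ℕ, I ^ i • ⊤ : Submodule R M) = ⊥ := by
  refine eq_bot_iff.mpr fun m hm ↦ ?_
  obtain ⟨r, hr⟩ := (I.mem_iInf_smul_pow_eq_bot_iff m).mp hm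
  exact h r r.2 m (by rw [sub_smul, one_smul, hr, sub_self])

theorem iInf_pow_eq_bot_of_one_sub_mul_injective
    (h : ∀ x ∈ I, ∀ s : R, (1 - x) * s = 0 → s = 0) :
    ⨅ i : ℕ, I ^ i = ⊥ := by
  simpa using I.iInf_pow_smul_eq_bot_of_one_sub_smul_injective (M := R) h

end Ideal

theorem krull_intersection {R : Type*} [CommRing R] [IsNoetherianRing R]
    (A : Ideal R) (h : ∀ x ∈ A, ∀ s : R, (1 - x) * s = 0 → s = 0) :
    ⨅ n : ℕ, A ^ (n + 1) = ⊥ :=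
  calc ⨅ n : ℕ, A ^ (n + 1) = A ^ 0 ⊓ ⨅ n : ℕ, A ^ (n + 1) := by
        rw [pow_zero, Ideal.one_eq_top, top_inf_eq]
    _ = ⨅ n : ℕ, A ^ n := inf_iInf_nat_succ _
    _ = ⊥ := A.iInf_pow_eq_bot_of_one_sub_mul_injective h
end

section
/- Let R be a commutative arithmetical ring (the ideal lattice is distributive). Then for any ideals A, B, C of R: A(B ∩ C) = AB ∩ AC, provided R is additionally a multiplication ring (for ideals X ⊆ Y there is Z with X = YZ). -/
/-!
Distributivity of the ideal lattice passes to localizations, and in a local ring it forces the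
ideals to form a chain (Jensen): writing `b = x + t (a + b)` with `x ∈ (a) ⊓ (b)` and
`t (a + b) ∈ (b)`, either `t` or `1 - t` is a unit, so `a ∈ (b)` or `b ∈ (a)`. For a chain
`B ≤ C` both sides of the identity are `A * B`, and an identity of ideals may be checked after
localizing at every maximal ideal.
-/

section

variable {R : Type*} [CommRing R]

theorem exists_mul_mem_span_and_one_sub_mul_mem_span
    (hdist : ∀ A B C : Ideal R, A ⊓ (B ⊔ C) = (A ⊓ B) ⊔ (A ⊓ C)) (a b : R) :
    ∃ t : R, t * a ∈ Ideal.span {b} ∧ (1 - t) * b ∈ Ideal.span {a} := by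
  have hb : b ∈ Ideal.span {b} ⊓ (Ideal.span {a} ⊔ Ideal.span {a + b}) := by
    refine ⟨Ideal.mem_span_singleton_self b, ?_⟩
    simpa using Submodule.sub_mem _ (Ideal.mem_sup_right (Ideal.mem_span_singleton_self (a + b)))
      (Ideal.mem_sup_left (Ideal.mem_span_singleton_self a))
  rw [hdist] at hb
  obtain ⟨x, ⟨-, hxa⟩, y, ⟨hyb, hy⟩, hxy⟩ := Submodule.mem_sup.mp hb
  obtain ⟨t, rfl⟩ := Ideal.mem_span_singleton'.mp hy
  refine ⟨t, ?_, ?_⟩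
  · have hta : t * a = t * (a + b) - t * b := by ring
    rw [hta]
    exact Submodule.sub_mem _ hyb (Ideal.mul_mem_left _ _ (Ideal.mem_span_singleton_self b))
  · have htb : (1 - t) * b = x + t * a := by linear_combination hxy.symm
    rw [htb]
    exact Submodule.add_mem _ hxa (Ideal.mul_mem_left _ _ (Ideal.mem_span_singleton_self a))

theorem Ideal.le_total_of_isLocalRing_of_distrib [IsLocalRing R]
    (hdist : ∀ A B C : Ideal R, A ⊓ (B ⊔ C) = (A ⊓ B) ⊔ (A ⊓ C)) (I J : Ideal R) :
    I ≤ J ∨ J ≤ I := by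
  by_contra! h
  obtain ⟨a, haI, haJ⟩ := SetLike.not_le_iff_exists.mp h.1
  obtain ⟨b, hbJ, hbI⟩ := SetLike.not_le_iff_exists.mp h.2
  obtain ⟨t, hta, htb⟩ := exists_mul_mem_span_and_one_sub_mul_mem_span hdist a b
  rcases IsLocalRing.isUnit_or_isUnit_one_sub_self t with ht | ht
  · rw [Ideal.unit_mul_mem_iff_mem _ ht] at hta
    exact haJ ((Ideal.span_singleton_le_iff_mem J).mpr hbJ hta)
  · rw [Ideal.unit_mul_mem_iff_mem _ ht] at htb
    exact hbI ((Ideal.span_singleton_le_iff_mem I).mpr haI htb)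

theorem IsLocalization.ideal_inf_sup_distrib {S : Type*} [CommRing S] [Algebra R S]
    (M : Submonoid R) [IsLocalization M S]
    (hdist : ∀ A B C : Ideal R, A ⊓ (B ⊔ C) = (A ⊓ B) ⊔ (A ⊓ C)) (A B C : Ideal S) :
    A ⊓ (B ⊔ C) = (A ⊓ B) ⊔ (A ⊓ C) := by
  rw [← IsLocalization.map_under M S A, ← IsLocalization.map_under M S B,
    ← IsLocalization.map_under M S C, ← Ideal.map_sup, ← IsLocalization.map_inf M,
    ← IsLocalization.map_inf M, ← IsLocalization.map_inf M, ← Ideal.map_sup, hdist]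

theorem Ideal.mul_inf_of_le_total (htotal : ∀ I J : Ideal R, I ≤ J ∨ J ≤ I) (A B C : Ideal R) :
    A * (B ⊓ C) = A * B ⊓ A * C := by
  rcases htotal B C with hBC | hCB
  · rw [inf_eq_left.mpr hBC, inf_eq_left.mpr (Ideal.mul_mono_right hBC)]
  · rw [inf_eq_right.mpr hCB, inf_eq_right.mpr (Ideal.mul_mono_right hCB)]

end

theorem mul_inf_eq_inf_mul_of_arithmetical_general {R : Type*} [CommRing R]
    (hdist : ∀ A B C : Ideal R, A ⊓ (B ⊔ C) = (A ⊓ B) ⊔ (A ⊓ C))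
    (A B C : Ideal R) :
    A * (B ⊓ C) = (A * B) ⊓ (A * C) := by
  refine Ideal.eq_of_localization_maximal fun P _ ↦ ?_
  have hdistP := IsLocalization.ideal_inf_sup_distrib P.primeCompl
    (S := Localization.AtPrime P) hdist
  rw [Ideal.map_mul, IsLocalization.map_inf P.primeCompl, IsLocalization.map_inf P.primeCompl,
    Ideal.map_mul, Ideal.map_mul]
  exact Ideal.mul_inf_of_le_total (Ideal.le_total_of_isLocalRing_of_distrib hdistP) _ _ _

theorem mul_inf_eq_inf_mul_of_arithmetical {R : Type*} [CommRing R]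
    (hdist : ∀ A B C : Ideal R, A ⊓ (B ⊔ C) = (A ⊓ B) ⊔ (A ⊓ C))
    (hmul : ∀ X Y : Ideal R, X ≤ Y → ∃ Z : Ideal R, X = Y * Z)
    (A B C : Ideal R) :
    A * (B ⊓ C) = (A * B) ⊓ (A * C) :=
  mul_inf_eq_inf_mul_of_arithmetical_general hdist A B C
end
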